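/- arXiv:2201.00929 — 2 statements merged into one kernel-verified Lean document; each statement's English description precedes it below -/
import Mathlib

section
/- Let L be the weighted Laplacian of a connected weighted graph on n ≥ 2 vertices whose edge weights are nonnegative and sum to 1. Then for every vertex k, L†_{kk} ≥ (1/L_{kk})·(1 − 1/n)², where L_{kk} is the weighted degree of k. -/
def lapMat {n : ℕ} (B : Matrix (Fin n) (Fin n) ℝ) : Matrix (Fin n) (Fin n) ℝ :=
  Matrix.of fun i j => if i = j then ∑ k, B i k else -B i j

def IsMoorePenrose {n : ℕ} (L M : Matrix (Fin n) (Fin n) ℝ) : Prop :=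
  L * M * L = L ∧ M * L * M = M ∧ (L * M).transpose = L * M ∧ (M * L).transpose = M * L


/-!
The form of `L = lapMat B` is `½ ∑ᵢⱼ Bᵢⱼ (xᵢ - xⱼ)² + ∑ᵢ Bᵢᵢ xᵢ²`, so `L` is positive semidefinite
and, the graph being connected, every vector in its kernel is constant. The Moore–Penrose
inverse `M` is unique, hence symmetric, hence positive semidefinite since `M = Mᵀ L M`.
`P = 1 - M L` is idempotent, symmetric and satisfies `L P = 0`, so all its entries equal one
number `c` with `n c² = c`; thus `(M L)ₖₖ = 1 - c ≥ 1 - 1/n`. Cauchy–Schwarz for the form of `L`,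
applied to `M eₖ` and `eₖ`, gives `(M L)ₖₖ² ≤ Mₖₖ Lₖₖ`.
-/

open Finset Matrix

theorem SimpleGraph.Preconnected.apply_eq_of_forall_adj {V α : Type*} {G : SimpleGraph V}
    (hG : G.Preconnected) {f : V → α} (hf : ∀ u v, G.Adj u v → f u = f v) (u v : V) :
    f u = f v := by
  obtain ⟨w⟩ := hG u v
  induction w with
  | nil => rfl
  | cons h _ ih => exact (hf _ _ h).trans ih

theorem Matrix.PosSemidef.sq_dotProduct_mulVec_le {ι : Type*} [Fintype ι] {A : Matrix ι ι ℝ}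
    (hA : A.PosSemidef) (x y : ι → ℝ) :
    (x ⬝ᵥ A *ᵥ y) ^ 2 ≤ (x ⬝ᵥ A *ᵥ x) * (y ⬝ᵥ A *ᵥ y) := by
  have hyx : y ⬝ᵥ A *ᵥ x = x ⬝ᵥ A *ᵥ y := by
    rw [dotProduct_mulVec, ← mulVec_transpose, dotProduct_comm,
      (isHermitian_iff_isSymm.mp hA.1).eq]
  have hquad : ∀ t : ℝ,
      0 ≤ (y ⬝ᵥ A *ᵥ y) * (t * t) + 2 * (x ⬝ᵥ A *ᵥ y) * t + x ⬝ᵥ A *ᵥ x := by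
    intro t
    have := hA.dotProduct_mulVec_nonneg (x + t • y)
    simp only [star_trivial, mulVec_add, mulVec_smul, add_dotProduct, dotProduct_add,
      smul_dotProduct, dotProduct_smul, smul_eq_mul, hyx] at this
    linarith
  have := discrim_le_zero hquad
  rw [discrim] at this
  linarith

theorem le_inv_card_of_isIdempotentElem {ι : Type*} [Fintype ι] [Nonempty ι]
    {P : Matrix ι ι ℝ} {c : ℝ} (hP : IsIdempotentElem P) (hc : ∀ i j, P i j = c) :
    c ≤ (Fintype.card ι : ℝ)⁻¹ := by
  obtain ⟨i⟩ := ‹Nonempty ι›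
  have hcard : (Fintype.card ι : ℝ) * (c * c) = c := by
    simpa [mul_apply, hc] using congrFun (congrFun hP i) i
  rcases eq_or_ne c 0 with rfl | hc0
  · positivity
  · exact (eq_inv_of_mul_eq_one_right (by
      simpa [← mul_assoc, hc0] using hcard)).le

section Laplacian

variable {n : ℕ} {B : Matrix (Fin n) (Fin n) ℝ}

theorem lapMat_eq_diagonal_sub (B : Matrix (Fin n) (Fin n) ℝ) :
    lapMat B = diagonal (fun i => ∑ j, B i j + B i i) - B := by
  ext i j
  by_cases h : i = j
  · subst h; simp [lapMat]
  · simp [lapMat, h]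

theorem dotProduct_lapMat_mulVec (hsym : B.IsSymm) (x : Fin n → ℝ) :
    x ⬝ᵥ lapMat B *ᵥ x = (∑ i, ∑ j, B i j * (x i - x j) ^ 2) / 2 + ∑ i, B i i * x i ^ 2 := by
  have hswap : ∑ i, ∑ j, B i j * x j ^ 2 = ∑ i, ∑ j, B i j * x i ^ 2 := by
    rw [sum_comm]
    simp_rw [hsym.apply]
  have hexpand : ∑ i, ∑ j, B i j * (x i - x j) ^ 2
      = ∑ i, ∑ j, B i j * x i ^ 2 + ∑ i, ∑ j, B i j * x j ^ 2
        - 2 * ∑ i, ∑ j, x i * (B i j * x j) := by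
    simp only [mul_sum, ← sum_add_distrib, ← sum_sub_distrib]
    exact sum_congr rfl fun i _ => sum_congr rfl fun j _ => by ring
  have hdiag : x ⬝ᵥ diagonal (fun i => ∑ j, B i j + B i i) *ᵥ x
      = ∑ i, ∑ j, B i j * x i ^ 2 + ∑ i, B i i * x i ^ 2 := by
    simp only [dotProduct, mulVec_diagonal, ← sum_add_distrib]
    exact sum_congr rfl fun i _ => by rw [← sum_mul]; ring
  have hoff : x ⬝ᵥ B *ᵥ x = ∑ i, ∑ j, x i * (B i j * x j) := by
    simp only [dotProduct, mulVec, mul_sum]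
  rw [hexpand, hswap, lapMat_eq_diagonal_sub, sub_mulVec, dotProduct_sub, hdiag, hoff]
  ring

theorem isSymm_lapMat (hsym : B.IsSymm) : (lapMat B).IsSymm := by
  ext i j
  by_cases h : i = j
  · subst h; rfl
  · simp [lapMat, h, Ne.symm h, hsym.apply]

theorem posSemidef_lapMat (hsym : B.IsSymm) (hnonneg : ∀ i j, 0 ≤ B i j) :
    (lapMat B).PosSemidef := by
  refine .of_dotProduct_mulVec_nonneg (isHermitian_iff_isSymm.mpr (isSymm_lapMat hsym))
    fun x => ?_
  rw [star_trivial, dotProduct_lapMat_mulVec hsym]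
  exact add_nonneg
    (div_nonneg (sum_nonneg fun i _ => sum_nonneg fun j _ =>
      mul_nonneg (hnonneg i j) (sq_nonneg _)) zero_le_two)
    (sum_nonneg fun i _ => mul_nonneg (hnonneg i i) (sq_nonneg _))

theorem eq_of_lapMat_mulVec_eq_zero (hsym : B.IsSymm) (hnonneg : ∀ i j, 0 ≤ B i j)
    (hconn : (SimpleGraph.fromRel (fun i j => 0 < B i j)).Connected) {x : Fin n → ℝ}
    (hx : lapMat B *ᵥ x = 0) (i j : Fin n) : x i = x j := by
  have hterm_nonneg : ∀ i j, 0 ≤ B i j * (x i - x j) ^ 2 := fun i j =>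
    mul_nonneg (hnonneg i j) (sq_nonneg _)
  have hsum : ∑ i, ∑ j, B i j * (x i - x j) ^ 2 = 0 := by
    have hq := dotProduct_lapMat_mulVec hsym x
    rw [hx, dotProduct_zero] at hq
    have hdiag : 0 ≤ ∑ i, B i i * x i ^ 2 :=
      sum_nonneg fun i _ => mul_nonneg (hnonneg i i) (sq_nonneg _)
    have := sum_nonneg fun i (_ : i ∈ univ) => sum_nonneg fun j (_ : j ∈ univ) => hterm_nonneg i j
    linarith
  have hterm : ∀ i j, B i j * (x i - x j) ^ 2 = 0 := fun i j =>
    (sum_eq_zero_iff_of_nonneg fun j _ => hterm_nonneg i j).1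
      ((sum_eq_zero_iff_of_nonneg fun i _ => sum_nonneg fun j _ => hterm_nonneg i j).1 hsum i
        (mem_univ i)) j (mem_univ j)
  refine hconn.preconnected.apply_eq_of_forall_adj (fun u v huv => ?_) i j
  have hpos : 0 < B u v := ((SimpleGraph.fromRel_adj _ _ _).1 huv).2.elim id (hsym.apply v u ▸ ·)
  rcases mul_eq_zero.1 (hterm u v) with h | h
  · exact absurd h hpos.ne'
  · exact sub_eq_zero.1 (pow_eq_zero_iff two_ne_zero |>.1 h)

end Laplacian

namespace IsMoorePenrose

variable {n : ℕ} {L M M' : Matrix (Fin n) (Fin n) ℝ}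

theorem unique (h : IsMoorePenrose L M) (h' : IsMoorePenrose L M') : M = M' := by
  obtain ⟨h1, h2, h3, h4⟩ := h
  obtain ⟨h1', h2', h3', h4'⟩ := h'
  have hLM : L * M = L * M' := by
    calc L * M = (L * M' * L) * M := by rw [h1']
    _ = (L * M')ᵀ * (L * M)ᵀ := by rw [h3', h3, mul_assoc (L * M')]
    _ = ((L * M * L) * M')ᵀ := by rw [← transpose_mul, mul_assoc (L * M)]
    _ = L * M' := by rw [h1, h3']
  have hML : M * L = M' * L := by
    calc M * L = M * (L * M' * L) := by rw [h1']
    _ = (M * L)ᵀ * (M' * L)ᵀ := by rw [h4, h4']; noncomm_ring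
    _ = (M' * (L * M * L))ᵀ := by rw [← transpose_mul]; noncomm_ring
    _ = M' * L := by rw [h1, h4']
  calc M = M * L * M := h2.symm
  _ = M' * L * M' := by rw [hML, mul_assoc, hLM, ← mul_assoc]
  _ = M' := h2'

theorem transpose (hL : L.IsSymm) (h : IsMoorePenrose L M) : IsMoorePenrose L Mᵀ := by
  obtain ⟨h1, h2, h3, h4⟩ := h
  refine ⟨?_, ?_, ?_, ?_⟩
  · simpa [transpose_mul, hL.eq, mul_assoc] using congrArg Matrix.transpose h1
  · simpa [transpose_mul, hL.eq, mul_assoc] using congrArg Matrix.transpose h2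
  · have e : L * Mᵀ = M * L := by rw [← h4, transpose_mul, hL.eq]
    rw [e, h4]
  · have e : Mᵀ * L = L * M := by rw [← h3, transpose_mul, hL.eq]
    rw [e, h3]

theorem isSymm (hL : L.IsSymm) (h : IsMoorePenrose L M) : M.IsSymm :=
  (h.transpose hL).unique h

theorem isIdempotentElem_mul (h : IsMoorePenrose L M) : IsIdempotentElem (M * L) := by
  rw [IsIdempotentElem, ← mul_assoc, h.2.1]

theorem posSemidef (hL : L.PosSemidef) (h : IsMoorePenrose L M) : M.PosSemidef := by
  have hM := h.isSymm (isHermitian_iff_isSymm.mp hL.1)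
  simpa [conjTranspose_eq_transpose_of_trivial, hM.eq, h.2.1] using
    hL.conjTranspose_mul_mul_same M

theorem sq_mul_apply_le (hL : L.PosSemidef) (h : IsMoorePenrose L M) (k : Fin n) :
    ((M * L) k k) ^ 2 ≤ M k k * L k k := by
  set e : Fin n → ℝ := Pi.single k 1
  have hM := h.isSymm (isHermitian_iff_isSymm.mp hL.1)
  have hMe : ∀ v, (M *ᵥ e) ⬝ᵥ v = (M *ᵥ v) k := fun v => by
    conv_lhs => rw [← hM.eq]
    rw [mulVec_transpose, ← dotProduct_mulVec, single_dotProduct, one_mul]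
  have hentry : ∀ A : Matrix (Fin n) (Fin n) ℝ, (A *ᵥ e) k = A k k := fun A => by
    simp [e, mulVec_single]
  have key := hL.sq_dotProduct_mulVec_le (M *ᵥ e) e
  simp only [hMe, mulVec_mulVec, hentry, e, single_dotProduct, one_mul] at key
  rwa [← mul_assoc, h.2.1] at key

end IsMoorePenrose

theorem one_sub_inv_le_mul_lapMat_apply_self {n : ℕ} {B : Matrix (Fin n) (Fin n) ℝ}
    (hsym : B.IsSymm) (hnonneg : ∀ i j, 0 ≤ B i j)
    (hconn : (SimpleGraph.fromRel (fun i j => 0 < B i j)).Connected)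
    {M : Matrix (Fin n) (Fin n) ℝ} (hM : IsMoorePenrose (lapMat B) M) (k : Fin n) :
    1 - (n : ℝ)⁻¹ ≤ (M * lapMat B) k k := by
  set P := 1 - M * lapMat B
  have hLP : lapMat B * P = 0 := by rw [mul_sub, mul_one, ← mul_assoc, hM.1, sub_self]
  have hPsym : P.IsSymm := by
    rw [IsSymm, transpose_sub, transpose_one, hM.2.2.2]
  have hcol : ∀ i i' j, P i j = P i' j := fun i i' j =>
    eq_of_lapMat_mulVec_eq_zero hsym hnonneg hconn (x := fun i => P i j)
      (by ext i; simpa [mul_apply, mulVec, dotProduct] using congrFun (congrFun hLP i) j) i i'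
  have hconst : ∀ i j, P i j = P k k := fun i j => by
    rw [hcol i k j, ← hPsym.apply, hcol j k k]
  have : Nonempty (Fin n) := ⟨k⟩
  have hc := le_inv_card_of_isIdempotentElem hM.isIdempotentElem_mul.one_sub hconst
  simp only [Fintype.card_fin, P, Matrix.sub_apply, one_apply_eq] at hc
  linarith

theorem stmt5_general {n : ℕ} (B : Matrix (Fin n) (Fin n) ℝ)
    (hsym : B.IsSymm) (hnonneg : ∀ i j, 0 ≤ B i j)
    (hconn : (SimpleGraph.fromRel (fun i j => 0 < B i j)).Connected)
    (M : Matrix (Fin n) (Fin n) ℝ) (hM : IsMoorePenrose (lapMat B) M)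
    (k : Fin n) :
    M k k ≥ (1 / lapMat B k k) * (1 - (n : ℝ)⁻¹)^2 := by
  have hL := posSemidef_lapMat hsym hnonneg
  have hg := one_sub_inv_le_mul_lapMat_apply_self hsym hnonneg hconn hM k
  have hn : 0 ≤ 1 - (n : ℝ)⁻¹ := by
    have : (1 : ℝ) ≤ n := by exact_mod_cast k.pos
    linarith [inv_le_one_of_one_le₀ this]
  rw [ge_iff_le, one_div_mul_eq_div]
  -- `div_le_of_le_mul₀` also covers `lapMat B k k = 0`, where the left side is `x / 0 = 0`.
  refine div_le_of_le_mul₀ hL.diag_nonneg (hM.posSemidef hL).diag_nonneg ?_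
  calc (1 - (n : ℝ)⁻¹) ^ 2 ≤ ((M * lapMat B) k k) ^ 2 := pow_le_pow_left₀ hn hg 2
    _ ≤ M k k * lapMat B k k := hM.sq_mul_apply_le hL k

/-- if `L` is the Laplacian of a connected weighted graph on `n ≥ 2`
vertices whose nonnegative edge weights sum to `1` (so `∑ᵢ∑ⱼ Bᵢⱼ = 2`), then for every
vertex `k`, `L†ₖₖ ≥ (1 / Lₖₖ) (1 − 1/n)²`. -/
theorem stmt5 {n : ℕ} (hn : 2 ≤ n) (B : Matrix (Fin n) (Fin n) ℝ)
    (hsym : B.IsSymm) (hnonneg : ∀ i j, 0 ≤ B i j)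
    (hsum : ∑ i, ∑ j, B i j = 2)
    (hconn : (SimpleGraph.fromRel (fun i j => 0 < B i j)).Connected)
    (M : Matrix (Fin n) (Fin n) ℝ) (hM : IsMoorePenrose (lapMat B) M)
    (k : Fin n) :
    M k k ≥ (1 / lapMat B k k) * (1 - (n : ℝ)⁻¹)^2 :=
  stmt5_general B hsym hnonneg hconn M hM k
end

section
/- Let T be a tree on n vertices with m = n−1 edges, fix a vertex k, and for each edge l let a_l be the number of (unordered) vertex pairs whose unique path uses edge l, and a_l^k the number of vertices j whose unique path from k uses edge l. Then on the simplex of positive weights summing to 1, the vulnerability measure satisfies n² M̂_k(b) = Σ_l (n a_l^k − a_l)/b_l, and the weights b̄_l = (n a_l^k − a_l)^{1/2} / Σ_s (n a_s^k − a_s)^{1/2} minimize M̂_k over this simplex. -/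
open Classical in
/-- Weight matrix obtained from an edge-weight function `w` on a graph `G`. -/
noncomputable def BofW {n : ℕ} (G : SimpleGraph (Fin n)) (w : Sym2 (Fin n) → ℝ) :
    Matrix (Fin n) (Fin n) ℝ :=
  Matrix.of fun i j => if G.Adj i j then w s(i, j) else 0

/-- Effective resistance between `i` and `j` computed from the pseudoinverse `M`. -/
def resist {n : ℕ} (M : Matrix (Fin n) (Fin n) ℝ) (i j : Fin n) : ℝ :=
  M i i + M j j - 2 * M i j

/-- The vulnerability measure `M̂ₖ = n⁻¹ Σⱼ Ωⱼₖ − n⁻² Σ_{i<j} Ωᵢⱼ`. -/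
noncomputable def MhatM {n : ℕ} (M : Matrix (Fin n) (Fin n) ℝ) (k : Fin n) : ℝ :=
  (n : ℝ)⁻¹ * (∑ j, resist M j k)
    - ((n : ℝ)^2)⁻¹ * (∑ i, ∑ j, if i < j then resist M i j else 0)

open Classical in
/-- `aK G k e` : the number of vertices `j` whose unique path from `k` uses the edge `e`. -/
noncomputable def aK {n : ℕ} (G : SimpleGraph (Fin n)) (k : Fin n) (e : Sym2 (Fin n)) : ℕ :=
  (Finset.univ.filter fun j : Fin n =>
    ∀ p : G.Walk k j, p.IsPath → e ∈ p.edges).card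

open Classical in
/-- `aAll G e` : the number of unordered vertex pairs whose unique path uses the edge `e`. -/
noncomputable def aAll {n : ℕ} (G : SimpleGraph (Fin n)) (e : Sym2 (Fin n)) : ℕ :=
  (Finset.univ.filter fun q : Fin n × Fin n =>
    q.1 < q.2 ∧ ∀ p : G.Walk q.1 q.2, p.IsPath → e ∈ p.edges).card

/-!
On a tree the pseudoinverse of the weighted Laplacian is explicit: if the edge `e = s(a, c)` has
`a` on the far side from a root `r`, the vector equal to `(w e)⁻¹` on the far side of `e` and `0`
elsewhere is mapped by the Laplacian to `δₐ - δ_c`. Summing these along the path from `i` to `j`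
telescopes to a potential for `δᵢ - δⱼ`, so the effective resistance is `Σ_{e ∈ path} (w e)⁻¹`.
Summing over vertices, `n² M̂ₖ = Σₑ (n aₑᵏ - aₑ)/wₑ`; and since deleting `e` cuts the tree into
pieces of sizes `aₑᵏ` and `n - aₑᵏ`, `n aₑᵏ - aₑ = (aₑᵏ)²`. On the simplex, Sedrakyan's form of
Cauchy–Schwarz bounds `Σₑ (aₑᵏ)²/wₑ` below by `(Σₑ aₑᵏ)²`, with equality at `w ∝ aᵏ`.
-/

open Finset

lemma Finset.card_filter_lt_and_not_iff {α : Type*} [Fintype α] [LinearOrder α] (s : Finset α) :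
    #{q : α × α | q.1 < q.2 ∧ ¬(q.1 ∈ s ↔ q.2 ∈ s)} = #s * #sᶜ := by
  rw [← card_product]
  refine card_nbij' (fun q => if q.1 ∈ s then q else q.swap)
    (fun q => if q.1 < q.2 then q else q.swap) ?_ ?_ ?_ ?_
  · intro q hq
    simp only [coe_filter, mem_univ, true_and, Set.mem_ofPred_eq] at hq
    by_cases h : q.1 ∈ s <;> simp [h] at hq ⊢ <;> tauto
  · intro q hq
    simp only [coe_product, Set.mem_prod, mem_coe, mem_compl] at hq
    have hne : q.1 ≠ q.2 := fun h => hq.2 (h ▸ hq.1)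
    rcases hne.lt_or_gt with h | h
    · simp [h, hq.1, hq.2]
    · simp [h, h.not_gt, hq.1, hq.2]
  · intro q hq
    simp only [coe_filter, mem_univ, true_and, Set.mem_ofPred_eq] at hq
    by_cases h : q.1 ∈ s <;> simp [h, hq.1, hq.1.not_gt]
  · intro q hq
    simp only [coe_product, Set.mem_prod, mem_coe, mem_compl] at hq
    have hne : q.1 ≠ q.2 := fun h => hq.2 (h ▸ hq.1)
    rcases hne.lt_or_gt with h | h
    · simp [h, hq.1]
    · simp [h.not_gt, hq.2]

lemma Finset.sum_sum_ite_eq_sum_card_mul {α β : Type*} [Fintype α] (t : Finset β)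
    (P : α → β → Prop) [∀ a b, Decidable (P a b)] (c : β → ℝ) :
    ∑ a, ∑ b ∈ t, (if P a b then c b else 0) = ∑ b ∈ t, (#{a | P a b} : ℝ) * c b := by
  rw [sum_comm]
  refine sum_congr rfl fun b _ => ?_
  rw [natCast_card_filter, sum_mul]
  simp only [boole_mul]

lemma Finset.sum_sq_div_div_sum_le_sum_sq_div {ι : Type*} (s : Finset ι) (f : ι → ℝ)
    {w : ι → ℝ} (hw : ∀ i ∈ s, 0 < w i) (hsum : ∑ i ∈ s, w i = 1) :
    ∑ i ∈ s, f i ^ 2 / (f i / ∑ j ∈ s, f j) ≤ ∑ i ∈ s, f i ^ 2 / w i := by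
  have hterm : ∀ i, f i ^ 2 / (f i / ∑ j ∈ s, f j) = f i * ∑ j ∈ s, f j := by
    intro i
    rcases eq_or_ne (f i) 0 with h | h
    · simp [h]
    · field_simp
  calc ∑ i ∈ s, f i ^ 2 / (f i / ∑ j ∈ s, f j) = (∑ i ∈ s, f i) ^ 2 / ∑ i ∈ s, w i := by
        rw [sum_congr rfl fun i _ => hterm i, ← sum_mul, hsum, div_one, sq]
    _ ≤ ∑ i ∈ s, f i ^ 2 / w i := sq_sum_div_le_sum_sq_div s f hw

namespace SimpleGraph

variable {V : Type*} {G : SimpleGraph V} (hT : G.IsTree)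

noncomputable def treePath (a b : V) : G.Walk a b :=
  (hT.existsUnique_path a b).choose

lemma isPath_treePath (a b : V) : (treePath hT a b).IsPath :=
  (hT.existsUnique_path a b).choose_spec.1

variable {hT}

lemma eq_treePath {a b : V} {p : G.Walk a b} (hp : p.IsPath) : p = treePath hT a b :=
  (hT.existsUnique_path a b).choose_spec.2 p hp

lemma forall_isPath_mem_edges_iff (a b : V) (e : Sym2 V) :
    (∀ p : G.Walk a b, p.IsPath → e ∈ p.edges) ↔ e ∈ (treePath hT a b).edges :=
  ⟨fun h => h _ (isPath_treePath hT a b), fun h _ hp => eq_treePath hp ▸ h⟩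

lemma treePath_self (a : V) : treePath hT a a = .nil :=
  (eq_treePath .nil).symm

lemma mem_edges_treePath_comm {a b : V} {e : Sym2 V} :
    e ∈ (treePath hT a b).edges ↔ e ∈ (treePath hT b a).edges := by
  rw [← eq_treePath (isPath_treePath hT a b).reverse, Walk.edges_reverse, List.mem_reverse]

lemma treePath_eq_concat_or {r u v : V} (h : G.Adj u v) :
    treePath hT r v = (treePath hT r u).concat h ∨
      treePath hT r u = (treePath hT r v).concat h.symm := by
  have hu := isPath_treePath hT r u
  have hv := isPath_treePath hT r v
  by_cases hus : u ∈ (treePath hT r v).support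
  · exact .inl (hT.isAcyclic.path_concat hu hv h hus)
  · exact .inr (hT.isAcyclic.path_concat hv hu h.symm
      (hT.isAcyclic.mem_support_of_ne_mem_support_of_adj_of_isPath hu hv h hus))

lemma mem_edges_treePath_adj_iff {r u v : V} (h : G.Adj u v) :
    s(u, v) ∈ (treePath hT r v).edges ↔ s(u, v) ∉ (treePath hT r u).edges := by
  have key : ∀ {x y : V} (hxy : G.Adj x y), treePath hT r y = (treePath hT r x).concat hxy →
      s(x, y) ∈ (treePath hT r y).edges ∧ s(x, y) ∉ (treePath hT r x).edges := by
    intro x y hxy hc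
    have hnd := hc ▸ (isPath_treePath hT r y).edges_nodup
    rw [Walk.edges_concat, List.concat_eq_append, List.nodup_append] at hnd
    rw [hc, Walk.edges_concat]
    exact ⟨by simp, fun hm => hnd.2.2 _ hm _ (List.mem_singleton_self _) rfl⟩
  rcases treePath_eq_concat_or (r := r) h with hc | hc
  · exact iff_of_true (key h hc).1 (key h hc).2
  · have := key h.symm hc
    rw [Sym2.eq_swap] at this
    exact iff_of_false this.2 (not_not.2 this.1)

lemma mem_edges_treePath_iff_of_adj {r u v : V} {e : Sym2 V} (h : G.Adj u v) (he : e ≠ s(u, v)) :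
    e ∈ (treePath hT r u).edges ↔ e ∈ (treePath hT r v).edges := by
  rcases treePath_eq_concat_or (r := r) h with hc | hc <;>
  · rw [hc, Walk.edges_concat, List.concat_eq_append, List.mem_append, List.mem_singleton]
    simp [he, Sym2.eq_swap]

lemma mem_edges_treePath_iff_of_notMem_edges {r a b : V} {e : Sym2 V} (p : G.Walk a b)
    (he : e ∉ p.edges) : e ∈ (treePath hT r a).edges ↔ e ∈ (treePath hT r b).edges := by
  induction p with
  | nil => rfl
  | cons h q ih =>
    rw [Walk.edges_cons, List.mem_cons, not_or] at he
    exact (mem_edges_treePath_iff_of_adj h he.1).trans (ih he.2)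

lemma mem_edges_treePath_iff (r : V) {a b : V} {e : Sym2 V} :
    e ∈ (treePath hT a b).edges ↔
      ¬(e ∈ (treePath hT r a).edges ↔ e ∈ (treePath hT r b).edges) := by
  refine ⟨fun he => ?_, not_imp_comm.1 (mem_edges_treePath_iff_of_notMem_edges _)⟩
  suffices ∀ {x y : V} (p : G.Walk x y), p.IsPath → e ∈ p.edges →
      ¬(e ∈ (treePath hT r x).edges ↔ e ∈ (treePath hT r y).edges) from
    this _ (isPath_treePath hT a b) he
  intro x y p hp hep
  induction p with
  | nil => simp at hep
  | @cons x z y h q ih =>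
    rw [Walk.cons_isPath_iff] at hp
    rw [Walk.edges_cons, List.mem_cons] at hep
    by_cases hez : e = s(x, z)
    · subst hez
      have hq : s(x, z) ∉ q.edges := fun hm => hp.2 (q.fst_mem_support_of_mem_edges hm)
      rw [← mem_edges_treePath_iff_of_notMem_edges q hq, mem_edges_treePath_adj_iff h]
      tauto
    · rw [mem_edges_treePath_iff_of_adj h hez]
      exact ih hp.1 (hep.resolve_left hez)

end SimpleGraph

open SimpleGraph

section MoorePenrose

open Matrix

variable {n : ℕ} {L M M' : Matrix (Fin n) (Fin n) ℝ}

lemma IsMoorePenrose.transpose_s14 (h : IsMoorePenrose L M) : IsMoorePenrose Lᵀ Mᵀ := by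
  obtain ⟨h₁, h₂, h₃, h₄⟩ := h
  refine ⟨?_, ?_, ?_, ?_⟩
  · rw [← transpose_mul, ← transpose_mul, ← Matrix.mul_assoc, h₁]
  · rw [← transpose_mul, ← transpose_mul, ← Matrix.mul_assoc, h₂]
  · rw [← transpose_mul, h₄]; exact h₄
  · rw [← transpose_mul, h₃]; exact h₃

lemma IsMoorePenrose.unique_s14 (h : IsMoorePenrose L M) (h' : IsMoorePenrose L M') : M = M' := by
  obtain ⟨h₁, h₂, h₃, h₄⟩ := h
  obtain ⟨h₁', h₂', h₃', h₄'⟩ := h'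
  have hLM : L * M = L * M' :=
    calc L * M = (L * M)ᵀ := h₃.symm
      _ = ((L * M') * (L * M))ᵀ := by rw [← Matrix.mul_assoc, h₁']
      _ = (L * M) * (L * M') := by rw [transpose_mul, h₃, h₃']
      _ = L * M' := by rw [← Matrix.mul_assoc, h₁]
  have hML : M * L = M' * L :=
    calc M * L = (M * L)ᵀ := h₄.symm
      _ = ((M * L) * (M' * L))ᵀ := by rw [Matrix.mul_assoc, ← Matrix.mul_assoc L, h₁']
      _ = (M' * L) * (M * L) := by rw [transpose_mul, h₄, h₄']
      _ = M' * L := by rw [Matrix.mul_assoc, ← Matrix.mul_assoc L, h₁]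
  calc M = M * L * M' := by rw [Matrix.mul_assoc, ← hLM, ← Matrix.mul_assoc, h₂]
    _ = M' := by rw [hML, h₂']

lemma IsMoorePenrose.isSymm_s14 (hL : L.IsSymm) (h : IsMoorePenrose L M) : M.IsSymm :=
  (hL.eq ▸ h.transpose_s14).unique_s14 h

lemma IsMoorePenrose.dotProduct_mulVec_mulVec (hL : L.IsSymm) (h : IsMoorePenrose L M)
    (x : Fin n → ℝ) : L *ᵥ x ⬝ᵥ M *ᵥ (L *ᵥ x) = x ⬝ᵥ L *ᵥ x := by
  nth_rw 1 [← hL.eq]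
  rw [mulVec_transpose, ← dotProduct_mulVec, mulVec_mulVec, mulVec_mulVec, h.1]

end MoorePenrose

section Laplacian

open Matrix

variable {n : ℕ} {G : SimpleGraph (Fin n)}

lemma lapMat_mulVec_apply {B : Matrix (Fin n) (Fin n) ℝ} (hB : ∀ v, B v v = 0) (y : Fin n → ℝ)
    (v : Fin n) : (lapMat B *ᵥ y) v = ∑ u, B v u * (y v - y u) := by
  simp only [mulVec, dotProduct, lapMat, of_apply, ite_mul, neg_mul, mul_sub, sum_sub_distrib,
    ← sum_mul]
  rw [sum_ite, sum_neg_distrib, filter_eq, filter_ne]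
  simp [sum_erase_eq_sub, hB, ← sub_eq_add_neg]

lemma BofW_isSymm (w : Sym2 (Fin n) → ℝ) : (BofW G w).IsSymm := by
  ext u v
  simp only [transpose_apply, BofW, of_apply]
  rw [G.adj_comm, Sym2.eq_swap]

lemma lapMat_isSymm {B : Matrix (Fin n) (Fin n) ℝ} (hB : B.IsSymm) : (lapMat B).IsSymm := by
  ext u v
  simp only [transpose_apply, lapMat, of_apply, eq_comm (a := v), hB.apply u v]
  split_ifs with h
  · rw [h]
  · rfl

lemma BofW_apply_self (w : Sym2 (Fin n) → ℝ) (v : Fin n) : BofW G w v v = 0 := by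
  simp [BofW]

end Laplacian

section Resistance

open Matrix

variable {n : ℕ} {G : SimpleGraph (Fin n)} {hT : G.IsTree} {w : Sym2 (Fin n) → ℝ}

noncomputable def edgePotential (hT : G.IsTree) (w : Sym2 (Fin n) → ℝ) (r : Fin n)
    (e : Sym2 (Fin n)) (u : Fin n) : ℝ :=
  if e ∈ (treePath hT r u).edges then (w e)⁻¹ else 0

lemma lapMat_mulVec_edgePotential {r a c : Fin n} (h : G.Adj a c) (hw : w s(a, c) ≠ 0)
    (ha : s(a, c) ∈ (treePath hT r a).edges) :
    lapMat (BofW G w) *ᵥ edgePotential hT w r s(a, c) = Pi.single a 1 - Pi.single c 1 := by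
  have hc : s(a, c) ∉ (treePath hT r c).edges := by
    rwa [mem_edges_treePath_adj_iff h, not_not]
  have hterm : ∀ v u,
      BofW G w v u * (edgePotential hT w r s(a, c) v - edgePotential hT w r s(a, c) u)
        = (Pi.single a 1 : Fin n → ℝ) v * (Pi.single c 1 : Fin n → ℝ) u
          - (Pi.single c 1 : Fin n → ℝ) v * (Pi.single a 1 : Fin n → ℝ) u := by
    intro v u
    by_cases hvu : G.Adj v u
    · by_cases he : s(a, c) = s(v, u)
      · rcases Sym2.eq_iff.1 he with ⟨rfl, rfl⟩ | ⟨rfl, rfl⟩ <;>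
          simp [BofW, edgePotential, h, h.symm, h.ne, h.ne', ha, hc, hw, Sym2.eq_swap]
      · have hx := mem_edges_treePath_iff_of_adj (hT := hT) (r := r) hvu he
        have hav : ¬(v = a ∧ u = c) := by rintro ⟨rfl, rfl⟩; exact he rfl
        have hcv : ¬(v = c ∧ u = a) := by rintro ⟨rfl, rfl⟩; exact he Sym2.eq_swap
        simp only [edgePotential, hx, sub_self, mul_zero, Pi.single_apply]
        split_ifs <;> simp_all
    · have hav : ¬(v = a ∧ u = c) := by rintro ⟨rfl, rfl⟩; exact hvu h
      have hcv : ¬(v = c ∧ u = a) := by rintro ⟨rfl, rfl⟩; exact hvu h.symm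
      simp only [BofW, of_apply, hvu, if_false, zero_mul, Pi.single_apply]
      split_ifs <;> simp_all
  ext v
  rw [lapMat_mulVec_apply (BofW_apply_self w), sum_congr rfl fun u _ => hterm v u,
    sum_sub_distrib, ← mul_sum, ← mul_sum, sum_pi_single', sum_pi_single']
  simp

lemma lapMat_mulVec_sum_edgePotential (hw : ∀ e ∈ G.edgeSet, w e ≠ 0) {a r : Fin n}
    (p : G.Walk a r) (hp : p.IsPath) :
    lapMat (BofW G w) *ᵥ ∑ e ∈ p.edges.toFinset, edgePotential hT w r e
      = Pi.single a 1 - Pi.single r 1 := by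
  induction p with
  | nil => simp
  | @cons a b r h q ih =>
    have hab : s(a, b) ∈ (treePath hT r a).edges := by
      rw [mem_edges_treePath_comm, ← eq_treePath hp]
      simp
    have hq : s(a, b) ∉ q.edges.toFinset := by
      rw [List.mem_toFinset]
      exact fun hm => (Walk.cons_isPath_iff h q).1 hp |>.2 (q.fst_mem_support_of_mem_edges hm)
    rw [Walk.edges_cons, List.toFinset_cons, sum_insert hq, mulVec_add, ih hp.of_cons,
      lapMat_mulVec_edgePotential h (hw _ h) hab]
    abel

lemma resist_eq_dotProduct {M : Matrix (Fin n) (Fin n) ℝ} (hM : M.IsSymm) (i j : Fin n) :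
    resist M i j = (Pi.single i 1 - Pi.single j 1) ⬝ᵥ M *ᵥ (Pi.single i 1 - Pi.single j 1) := by
  simp only [mulVec_sub, sub_dotProduct, dotProduct_sub, mulVec_single_one,
    single_one_dotProduct, col_apply, resist, hM.apply j i]
  ring

lemma resist_eq_sum_treePath (hT : G.IsTree) (hw : ∀ e ∈ G.edgeSet, w e ≠ 0)
    {M : Matrix (Fin n) (Fin n) ℝ} (hM : IsMoorePenrose (lapMat (BofW G w)) M) (i j : Fin n) :
    resist M i j = ∑ e ∈ (treePath hT i j).edges.toFinset, (w e)⁻¹ := by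
  have hL : (lapMat (BofW G w)).IsSymm := lapMat_isSymm (BofW_isSymm w)
  set x := ∑ e ∈ (treePath hT i j).edges.toFinset, edgePotential hT w j e
  have hx : lapMat (BofW G w) *ᵥ x = Pi.single i 1 - Pi.single j 1 :=
    lapMat_mulVec_sum_edgePotential hw _ (isPath_treePath hT i j)
  have hxj : x j = 0 := by simp [x, edgePotential, treePath_self]
  have hxi : x i = ∑ e ∈ (treePath hT i j).edges.toFinset, (w e)⁻¹ := by
    simp only [x, Finset.sum_apply, edgePotential]
    exact sum_congr rfl fun e he => if_pos (mem_edges_treePath_comm.1 (List.mem_toFinset.1 he))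
  rw [resist_eq_dotProduct (hM.isSymm_s14 hL), ← hx, hM.dotProduct_mulVec_mulVec hL, hx,
    dotProduct_sub, dotProduct_single_one, dotProduct_single_one, hxi, hxj, sub_zero]

end Resistance

section Vulnerability

open Classical

variable {n : ℕ} {G : SimpleGraph (Fin n)}

lemma aK_eq_card (hT : G.IsTree) (k : Fin n) (e : Sym2 (Fin n)) :
    aK G k e = #{j | e ∈ (treePath hT k j).edges} :=
  congrArg card (filter_congr fun j _ => forall_isPath_mem_edges_iff k j e)

lemma aAll_eq_card (hT : G.IsTree) (e : Sym2 (Fin n)) :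
    aAll G e = #{q : Fin n × Fin n | q.1 < q.2 ∧ e ∈ (treePath hT q.1 q.2).edges} :=
  congrArg card (filter_congr fun _ _ => and_congr_right' (forall_isPath_mem_edges_iff _ _ e))

lemma natCast_mul_aK_sub_aAll (hT : G.IsTree) (k : Fin n) (e : Sym2 (Fin n)) :
    (n : ℝ) * aK G k e - aAll G e = (aK G k e : ℝ) ^ 2 := by
  set S : Finset (Fin n) := {j | e ∈ (treePath hT k j).edges}
  have hAll : aAll G e = #S * #Sᶜ := by
    rw [aAll_eq_card hT, ← card_filter_lt_and_not_iff]
    refine congrArg card (filter_congr fun _ _ => and_congr_right' ?_)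
    simp only [S, mem_filter, mem_univ, true_and]
    exact mem_edges_treePath_iff k
  have hS : (#S : ℝ) + #Sᶜ = n := by exact_mod_cast (card_add_card_compl S).trans (by simp)
  rw [aK_eq_card hT, hAll, Nat.cast_mul, ← hS]
  ring

lemma aK_pos (hT : G.IsTree) (k : Fin n) {e : Sym2 (Fin n)} (he : e ∈ G.edgeSet) :
    0 < aK G k e := by
  induction e using Sym2.ind with
  | _ u v =>
  have h : G.Adj u v := he
  rw [aK_eq_card hT, card_pos]
  by_cases hv : s(u, v) ∈ (treePath hT k v).edges
  · exact ⟨v, by simpa using hv⟩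
  · exact ⟨u, by simpa using not_not.1 ((not_congr (mem_edges_treePath_adj_iff h)).1 hv)⟩


lemma sq_mul_MhatM_eq (hT : G.IsTree) (k : Fin n)
    {w : Sym2 (Fin n) → ℝ} (hw : ∀ e ∈ G.edgeSet, w e ≠ 0) {M : Matrix (Fin n) (Fin n) ℝ}
    (hM : IsMoorePenrose (lapMat (BofW G w)) M) :
    (n : ℝ) ^ 2 * MhatM M k = ∑ e ∈ G.edgeFinset, ((n : ℝ) * aK G k e - aAll G e) / w e := by
  have hres : ∀ i j, resist M i j = ∑ e ∈ G.edgeFinset,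
      if e ∈ (treePath hT i j).edges then (w e)⁻¹ else 0 := by
    intro i j
    rw [resist_eq_sum_treePath hT hw hM, ← sum_filter]
    congr 1
    ext e
    simpa using fun he => Walk.edges_subset_edgeSet _ he
  have hroot : ∑ j, resist M j k = ∑ e ∈ G.edgeFinset, (aK G k e : ℝ) * (w e)⁻¹ := by
    simp only [hres, mem_edges_treePath_comm (b := k)]
    rw [sum_sum_ite_eq_sum_card_mul]
    simp only [aK_eq_card hT]
  have hpairs : ∑ i, ∑ j, (if i < j then resist M i j else 0)
      = ∑ e ∈ G.edgeFinset, (aAll G e : ℝ) * (w e)⁻¹ := by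
    rw [← Fintype.sum_prod_type']
    trans ∑ q : Fin n × Fin n, ∑ e ∈ G.edgeFinset,
      if q.1 < q.2 ∧ e ∈ (treePath hT q.1 q.2).edges then (w e)⁻¹ else 0
    · refine sum_congr rfl fun q _ => ?_
      split_ifs with hq <;> simp [hres, hq]
    · rw [sum_sum_ite_eq_sum_card_mul]
      simp only [aAll_eq_card hT]
  have hn : (n : ℝ) ≠ 0 := Nat.cast_ne_zero.2 k.pos.ne'
  rw [MhatM, mul_sub, ← mul_assoc, ← mul_assoc, pow_two, mul_inv_cancel_right₀ hn,
    mul_inv_cancel₀ (mul_ne_zero hn hn), one_mul, hroot, hpairs, mul_sum, ← sum_sub_distrib]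
  exact sum_congr rfl fun e _ => by ring

end Vulnerability

open Classical in
theorem stmt14_general {n : ℕ} (G : SimpleGraph (Fin n)) (hT : G.IsTree) (k : Fin n) :
    (∀ (w : Sym2 (Fin n) → ℝ) (M : Matrix (Fin n) (Fin n) ℝ),
      (∀ e ∈ G.edgeFinset, 0 < w e) → (∑ e ∈ G.edgeFinset, w e = 1) →
      IsMoorePenrose (lapMat (BofW G w)) M →
      (n : ℝ)^2 * MhatM M k
        = ∑ e ∈ G.edgeFinset, ((n : ℝ) * aK G k e - aAll G e) / w e) ∧
    (∀ (wbar : Sym2 (Fin n) → ℝ),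
      (∀ e ∈ G.edgeFinset,
        wbar e = Real.sqrt ((n : ℝ) * aK G k e - aAll G e)
          / ∑ s ∈ G.edgeFinset, Real.sqrt ((n : ℝ) * aK G k s - aAll G s)) →
      ∀ (w : Sym2 (Fin n) → ℝ) (M Mbar : Matrix (Fin n) (Fin n) ℝ),
      (∀ e ∈ G.edgeFinset, 0 < w e) → (∑ e ∈ G.edgeFinset, w e = 1) →
      IsMoorePenrose (lapMat (BofW G w)) M →
      IsMoorePenrose (lapMat (BofW G wbar)) Mbar →
      MhatM Mbar k ≤ MhatM M k) := by
  have hne : ∀ {w : Sym2 (Fin n) → ℝ}, (∀ e ∈ G.edgeFinset, 0 < w e) →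
      ∀ e ∈ G.edgeSet, w e ≠ 0 :=
    fun hw e he => (hw e (mem_edgeFinset.2 he)).ne'
  have hsqrt : ∀ e, √((n : ℝ) * aK G k e - aAll G e) = aK G k e := fun e => by
    rw [natCast_mul_aK_sub_aAll hT, Real.sqrt_sq (Nat.cast_nonneg _)]
  refine ⟨fun w M hw _ hM => sq_mul_MhatM_eq hT k (hne hw) hM, ?_⟩
  intro wbar hwbar w M Mbar hw hsum hM hMbar
  simp only [hsqrt] at hwbar
  have hwbar_ne : ∀ e ∈ G.edgeSet, wbar e ≠ 0 := fun e he => by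
    have he' := mem_edgeFinset.2 he
    have hpos : ∀ s ∈ G.edgeFinset, (0 : ℝ) < aK G k s :=
      fun s hs => Nat.cast_pos.2 (aK_pos hT k (mem_edgeFinset.1 hs))
    rw [hwbar e he']
    exact div_ne_zero (hpos e he').ne' (sum_pos hpos ⟨e, he'⟩).ne'
  have key : (n : ℝ) ^ 2 * MhatM Mbar k ≤ (n : ℝ) ^ 2 * MhatM M k := by
    rw [sq_mul_MhatM_eq hT k hwbar_ne hMbar, sq_mul_MhatM_eq hT k (hne hw) hM]
    simp only [natCast_mul_aK_sub_aAll hT]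
    calc _ = ∑ e ∈ G.edgeFinset, (aK G k e : ℝ) ^ 2
          / ((aK G k e : ℝ) / ∑ s ∈ G.edgeFinset, (aK G k s : ℝ)) :=
          sum_congr rfl fun e he => by rw [hwbar e he]
      _ ≤ _ := sum_sq_div_div_sum_le_sum_sq_div _ _ hw hsum
  exact le_of_mul_le_mul_left key (by have := k.pos; positivity)

open Classical in
/-- for a tree `T` on `n` vertices with `m = n−1` edges and a fixed vertex
`k`, on the simplex of positive edge weights summing to `1` one has
`n² M̂ₖ(b) = Σₗ (n aₗᵏ − aₗ)/bₗ`, and the weights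
`b̄ₗ = (n aₗᵏ − aₗ)^{1/2} / Σₛ (n aₛᵏ − aₛ)^{1/2}` minimize `M̂ₖ` over this simplex. -/
theorem stmt14 {n : ℕ} (hn : 2 ≤ n) (G : SimpleGraph (Fin n)) (hT : G.IsTree) (k : Fin n) :
    (∀ (w : Sym2 (Fin n) → ℝ) (M : Matrix (Fin n) (Fin n) ℝ),
      (∀ e ∈ G.edgeFinset, 0 < w e) → (∑ e ∈ G.edgeFinset, w e = 1) →
      IsMoorePenrose (lapMat (BofW G w)) M →
      (n : ℝ)^2 * MhatM M k
        = ∑ e ∈ G.edgeFinset, ((n : ℝ) * aK G k e - aAll G e) / w e) ∧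
    (∀ (wbar : Sym2 (Fin n) → ℝ),
      (∀ e ∈ G.edgeFinset,
        wbar e = Real.sqrt ((n : ℝ) * aK G k e - aAll G e)
          / ∑ s ∈ G.edgeFinset, Real.sqrt ((n : ℝ) * aK G k s - aAll G s)) →
      ∀ (w : Sym2 (Fin n) → ℝ) (M Mbar : Matrix (Fin n) (Fin n) ℝ),
      (∀ e ∈ G.edgeFinset, 0 < w e) → (∑ e ∈ G.edgeFinset, w e = 1) →
      IsMoorePenrose (lapMat (BofW G w)) M →
      IsMoorePenrose (lapMat (BofW G wbar)) Mbar →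
      MhatM Mbar k ≤ MhatM M k) :=
  stmt14_general G hT k
end
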